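/- Let X_1, X_2, X_r, Y_1, Y_r, Ŷ_r be finite discrete random variables whose joint law factors as p(x_1)p(x_2)p(x_r)p(y_1,y_r|x_1,x_2,x_r)p(ŷ_r|x_r,y_r), and suppose the symmetry conditions I(X_r;Y_1|X_1) = I(X_r;Y_2|X_2) and I(Ŷ_r;Y_r|X_1,X_r,Y_1) = I(Ŷ_r;Y_r|X_2,X_r,Y_2) hold together with the binning constraint max{I(Ŷ_r;Y_r|X_1,X_r,Y_1), I(Ŷ_r;Y_r|X_2,X_r,Y_2)} ≤ min{I(X_r;Y_1|X_1), I(X_r;Y_2|X_2)}. Then I(X_2;Y_1,Ŷ_r|X_1,X_r) ≤ I(X_2,X_r;Y_1|X_1) − I(Ŷ_r;Y_r|X_1,X_2,X_r,Y_1), with equality when I(X_r;Y_1|X_1) = I(Ŷ_r;Y_r|X_1,X_r,Y_1). -/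

import Mathlib

open scoped BigOperators Classical

/-!
By the chain rule, `I(X₂; Y₁, Ŷᵣ | X₁, Xᵣ) = I(X₂; Y₁ | X₁, Xᵣ) + I(Ŷᵣ; X₂ | X₁, Xᵣ, Y₁)`.
The factorization makes `Ŷᵣ — (Xᵣ, Yᵣ) — (X₁, X₂, Y₁)` a Markov chain, so
`I(Ŷᵣ; X₂ | X₁, Xᵣ, Y₁, Yᵣ) = 0`, and expanding `I(Ŷᵣ; X₂, Yᵣ | X₁, Xᵣ, Y₁)` in both orders gives
`I(Ŷᵣ; X₂ | X₁, Xᵣ, Y₁) = I(Ŷᵣ; Yᵣ | X₁, Xᵣ, Y₁) - I(Ŷᵣ; Yᵣ | X₁, X₂, Xᵣ, Y₁)`.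
With `I(X₂, Xᵣ; Y₁ | X₁) = I(Xᵣ; Y₁ | X₁) + I(X₂; Y₁ | X₁, Xᵣ)` the two rates differ by exactly
`I(Ŷᵣ; Yᵣ | X₁, Xᵣ, Y₁) - I(Xᵣ; Y₁ | X₁)`, which the binning constraint makes nonpositive.
-/

/-- Probability that the random variable `X` takes value `a`, under pmf `p` on `Ω`. -/
noncomputable def jp {Ω A : Type*} [Fintype Ω] (p : Ω → ℝ) (X : Ω → A) (a : A) : ℝ :=
  ∑ ω, if X ω = a then p ω else 0

/-- Conditional mutual information `I(X;Y|Z)` of finite discrete random variables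
(natural logarithm). -/
noncomputable def condMI {Ω A B C : Type*} [Fintype Ω] [Fintype A] [Fintype B] [Fintype C]
    (p : Ω → ℝ) (X : Ω → A) (Y : Ω → B) (Z : Ω → C) : ℝ :=
  ∑ a : A, ∑ b : B, ∑ c : C,
    jp p (fun ω => (X ω, Y ω, Z ω)) (a, b, c) *
      Real.log (jp p (fun ω => (X ω, Y ω, Z ω)) (a, b, c) * jp p Z c /
        (jp p (fun ω => (X ω, Z ω)) (a, c) * jp p (fun ω => (Y ω, Z ω)) (b, c)))

/-- `p` is a probability mass function. -/
def IsPMF {Ω : Type*} [Fintype Ω] (p : Ω → ℝ) : Prop :=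
  (∀ ω, 0 ≤ p ω) ∧ ∑ ω, p ω = 1

section InformationIdentities

variable {Ω A B C A' B' C' : Type*}

def SameFibers (X : Ω → A) (X' : Ω → A') : Prop :=
  ∀ ω ω', X ω' = X ω ↔ X' ω' = X' ω

theorem SameFibers.rfl {X : Ω → A} : SameFibers X X :=
  fun _ _ => Iff.rfl

theorem SameFibers.prod {X : Ω → A} {X' : Ω → A'} {Y : Ω → B} {Y' : Ω → B'}
    (hX : SameFibers X X') (hY : SameFibers Y Y') :
    SameFibers (fun ω => (X ω, Y ω)) (fun ω => (X' ω, Y' ω)) := fun ω ω' => by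
  simp only [Prod.ext_iff, hX ω ω', hY ω ω']

variable [Fintype Ω]

theorem jp_congr (p : Ω → ℝ) {X : Ω → A} {Y : Ω → B} {a : A} {b : B}
    (h : ∀ ω, X ω = a ↔ Y ω = b) : jp p X a = jp p Y b :=
  Finset.sum_congr rfl fun ω _ => by simp only [h ω]

theorem SameFibers.jp_eq {X : Ω → A} {X' : Ω → A'} (h : SameFibers X X') (p : Ω → ℝ) (ω : Ω) :
    jp p X (X ω) = jp p X' (X' ω) :=
  jp_congr p (h ω)

theorem le_jp_self (p : Ω → ℝ) (hp : ∀ ω, 0 ≤ p ω) (X : Ω → A) (ω : Ω) :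
    p ω ≤ jp p X (X ω) := by
  have := Finset.single_le_sum (f := fun ω' => if X ω' = X ω then p ω' else 0)
    (fun ω' _ => by split_ifs <;> simp [hp ω']) (Finset.mem_univ ω)
  simpa [jp] using this

theorem jp_self_ne_zero (p : Ω → ℝ) (hp : ∀ ω, 0 ≤ p ω) (X : Ω → A) {ω : Ω} (hω : 0 < p ω) :
    jp p X (X ω) ≠ 0 :=
  (hω.trans_le (le_jp_self p hp X ω)).ne'

theorem sum_jp_mul [Fintype A] (p : Ω → ℝ) (X : Ω → A) (F : A → ℝ) :
    ∑ a, jp p X a * F a = ∑ ω, p ω * F (X ω) := by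
  simp only [jp, Finset.sum_mul, ite_mul, zero_mul]
  rw [Finset.sum_comm]
  simp

theorem condMI_eq_sum [Fintype A] [Fintype B] [Fintype C] (p : Ω → ℝ)
    (X : Ω → A) (Y : Ω → B) (Z : Ω → C) :
    condMI p X Y Z = ∑ ω, p ω *
      Real.log (jp p (fun ω' => (X ω', Y ω', Z ω')) (X ω, Y ω, Z ω) * jp p Z (Z ω) /
        (jp p (fun ω' => (X ω', Z ω')) (X ω, Z ω) *
          jp p (fun ω' => (Y ω', Z ω')) (Y ω, Z ω))) := by
  rw [condMI]
  simp only [← Fintype.sum_prod_type']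
  exact sum_jp_mul p _ _

theorem condMI_congr [Fintype A] [Fintype B] [Fintype C] [Fintype A'] [Fintype B'] [Fintype C']
    (p : Ω → ℝ) {X : Ω → A} {Y : Ω → B} {Z : Ω → C} {X' : Ω → A'} {Y' : Ω → B'} {Z' : Ω → C'}
    (hX : SameFibers X X') (hY : SameFibers Y Y') (hZ : SameFibers Z Z') :
    condMI p X Y Z = condMI p X' Y' Z' := by
  simp only [condMI_eq_sum, (hX.prod (hY.prod hZ)).jp_eq p, hZ.jp_eq p, (hX.prod hZ).jp_eq p,
    (hY.prod hZ).jp_eq p]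

theorem condMI_symm [Fintype A] [Fintype B] [Fintype C] (p : Ω → ℝ)
    (X : Ω → A) (Y : Ω → B) (Z : Ω → C) :
    condMI p X Y Z = condMI p Y X Z := by
  have hXYZ : SameFibers (fun ω => (X ω, Y ω, Z ω)) (fun ω => (Y ω, X ω, Z ω)) :=
    fun _ _ => by simp only [Prod.ext_iff]; tauto
  simp only [condMI_eq_sum, hXYZ.jp_eq p, mul_comm (jp p (fun ω' => (X ω', Z ω')) _)]

end InformationIdentities

section Entropy

variable {Ω A B C D : Type*} [Fintype Ω]

/-- Written as the expectation of `-log p(X)` over outcomes rather than values, so that it only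
depends on the fibers of `X`. -/
noncomputable def entropy (p : Ω → ℝ) (X : Ω → A) : ℝ :=
  -∑ ω, p ω * Real.log (jp p X (X ω))

theorem SameFibers.entropy_eq {A' : Type*} {X : Ω → A} {X' : Ω → A'} (h : SameFibers X X')
    (p : Ω → ℝ) : entropy p X = entropy p X' := by
  simp only [entropy, h.jp_eq p]

theorem condMI_eq_entropy [Fintype A] [Fintype B] [Fintype C] (p : Ω → ℝ) (hp : ∀ ω, 0 ≤ p ω)
    (X : Ω → A) (Y : Ω → B) (Z : Ω → C) :
    condMI p X Y Z = entropy p (fun ω => (X ω, Z ω)) + entropy p (fun ω => (Y ω, Z ω))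
      - entropy p (fun ω => (X ω, Y ω, Z ω)) - entropy p Z := by
  have hterm : ∀ ω, p ω * Real.log (jp p (fun ω' => (X ω', Y ω', Z ω')) (X ω, Y ω, Z ω) *
      jp p Z (Z ω) / (jp p (fun ω' => (X ω', Z ω')) (X ω, Z ω) *
        jp p (fun ω' => (Y ω', Z ω')) (Y ω, Z ω))) =
      p ω * Real.log (jp p (fun ω' => (X ω', Y ω', Z ω')) (X ω, Y ω, Z ω))
        + p ω * Real.log (jp p Z (Z ω)) - p ω * Real.log (jp p (fun ω' => (X ω', Z ω')) (X ω, Z ω))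
        - p ω * Real.log (jp p (fun ω' => (Y ω', Z ω')) (Y ω, Z ω)) := by
    intro ω
    rcases (hp ω).eq_or_lt with hω | hω
    · simp [← hω]
    have hXYZ : jp p (fun ω' => (X ω', Y ω', Z ω')) (X ω, Y ω, Z ω) ≠ 0 := jp_self_ne_zero p hp _ hω
    have hZ : jp p Z (Z ω) ≠ 0 := jp_self_ne_zero p hp _ hω
    have hXZ : jp p (fun ω' => (X ω', Z ω')) (X ω, Z ω) ≠ 0 := jp_self_ne_zero p hp _ hω
    have hYZ : jp p (fun ω' => (Y ω', Z ω')) (Y ω, Z ω) ≠ 0 := jp_self_ne_zero p hp _ hω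
    rw [Real.log_div (mul_ne_zero hXYZ hZ) (mul_ne_zero hXZ hYZ), Real.log_mul hXYZ hZ,
      Real.log_mul hXZ hYZ]
    ring
  simp only [condMI_eq_sum, hterm, entropy, Finset.sum_add_distrib, Finset.sum_sub_distrib]
  ring

theorem condMI_prod_right [Fintype A] [Fintype B] [Fintype C] [Fintype D]
    (p : Ω → ℝ) (hp : ∀ ω, 0 ≤ p ω) (X : Ω → A) (Y : Ω → B) (Z : Ω → C) (W : Ω → D) :
    condMI p X (fun ω => (Y ω, Z ω)) W
      = condMI p X Y W + condMI p X Z (fun ω => (W ω, Y ω)) := by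
  have h₁ : SameFibers (fun ω => ((Y ω, Z ω), W ω)) (fun ω => (Z ω, W ω, Y ω)) :=
    fun _ _ => by simp only [Prod.ext_iff]; tauto
  have h₂ : SameFibers (fun ω => (X ω, (Y ω, Z ω), W ω)) (fun ω => (X ω, Z ω, W ω, Y ω)) :=
    fun _ _ => by simp only [Prod.ext_iff]; tauto
  have h₃ : SameFibers (fun ω => (Y ω, W ω)) (fun ω => (W ω, Y ω)) :=
    fun _ _ => by simp only [Prod.ext_iff]; tauto
  have h₄ : SameFibers (fun ω => (X ω, Y ω, W ω)) (fun ω => (X ω, W ω, Y ω)) :=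
    fun _ _ => by simp only [Prod.ext_iff]; tauto
  rw [condMI_eq_entropy p hp, condMI_eq_entropy p hp, condMI_eq_entropy p hp,
    h₁.entropy_eq, h₂.entropy_eq, h₃.entropy_eq, h₄.entropy_eq]
  ring

theorem condMI_prod_left [Fintype A] [Fintype B] [Fintype C] [Fintype D]
    (p : Ω → ℝ) (hp : ∀ ω, 0 ≤ p ω) (X : Ω → A) (Y : Ω → B) (Z : Ω → C) (W : Ω → D) :
    condMI p (fun ω => (X ω, Y ω)) Z W
      = condMI p X Z W + condMI p Y Z (fun ω => (W ω, X ω)) := by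
  rw [condMI_symm, condMI_prod_right p hp, condMI_symm p Z X, condMI_symm p Z Y]

end Entropy

section ConditionalIndependence

variable {Ω A B C D : Type*} [Fintype Ω]

theorem jp_eq_sum_jp_prod [Fintype B] (p : Ω → ℝ) (X : Ω → A) (Y : Ω → B) (a : A) :
    jp p X a = ∑ b, jp p (fun ω => (X ω, Y ω)) (a, b) := by
  simp only [jp]
  rw [Finset.sum_comm]
  refine Finset.sum_congr rfl fun ω _ => ?_
  by_cases hX : X ω = a <;> simp [Prod.ext_iff, hX]

theorem condMI_eq_zero_of_jp_eq_mul [Fintype A] [Fintype B] [Fintype C]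
    (p : Ω → ℝ) (hp : ∀ ω, 0 ≤ p ω) {X : Ω → A} {Y : Ω → B} {Z : Ω → C}
    (u : A → C → ℝ) (v : B → C → ℝ)
    (h : ∀ a b c, jp p (fun ω => (X ω, Y ω, Z ω)) (a, b, c) = u a c * v b c) :
    condMI p X Y Z = 0 := by
  have hXZ : ∀ a c, jp p (fun ω => (X ω, Z ω)) (a, c) = u a c * ∑ b, v b c := fun a c => by
    rw [jp_eq_sum_jp_prod p _ Y, Finset.mul_sum]
    refine Finset.sum_congr rfl fun b _ => ?_
    rw [← h]
    exact jp_congr p fun ω => by simp only [Prod.ext_iff]; tauto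
  have hYZ : ∀ b c, jp p (fun ω => (Y ω, Z ω)) (b, c) = (∑ a, u a c) * v b c := fun b c => by
    rw [jp_eq_sum_jp_prod p _ X, Finset.sum_mul]
    refine Finset.sum_congr rfl fun a _ => ?_
    rw [← h]
    exact jp_congr p fun ω => by simp only [Prod.ext_iff]; tauto
  have hZ : ∀ c, jp p Z c = (∑ a, u a c) * ∑ b, v b c := fun c => by
    rw [jp_eq_sum_jp_prod p Z X, Finset.sum_mul]
    refine Finset.sum_congr rfl fun a _ => ?_
    rw [← hXZ]
    exact jp_congr p fun ω => by simp only [Prod.ext_iff]; tauto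
  rw [condMI_eq_sum]
  refine Finset.sum_eq_zero fun ω _ => ?_
  rcases (hp ω).eq_or_lt with hω | hω
  · simp [← hω]
  have hXZ₀ : jp p (fun ω' => (X ω', Z ω')) (X ω, Z ω) ≠ 0 := jp_self_ne_zero p hp _ hω
  have hYZ₀ : jp p (fun ω' => (Y ω', Z ω')) (Y ω, Z ω) ≠ 0 := jp_self_ne_zero p hp _ hω
  rw [div_eq_one_iff_eq (mul_ne_zero hXZ₀ hYZ₀) |>.mpr (by rw [h, hZ, hXZ, hYZ]; ring),
    Real.log_one, mul_zero]

theorem condMI_eq_sub_of_condMI_eq_zero [Fintype A] [Fintype B] [Fintype C]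
    [Fintype D] (p : Ω → ℝ) (hp : ∀ ω, 0 ≤ p ω) {X : Ω → A} {Y : Ω → B} {Z : Ω → C}
    {W : Ω → D} (h : condMI p X Z (fun ω => (W ω, Y ω)) = 0) :
    condMI p X Z W = condMI p X Y W - condMI p X Y (fun ω => (W ω, Z ω)) := by
  have hYZ := condMI_prod_right p hp X Y Z W
  have hZY := condMI_prod_right p hp X Z Y W
  have hswap : condMI p X (fun ω => (Y ω, Z ω)) W = condMI p X (fun ω => (Z ω, Y ω)) W :=
    condMI_congr p .rfl (fun _ _ => by simp only [Prod.ext_iff]; tauto) .rfl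
  linarith

end ConditionalIndependence

section Relay

variable {Ω A1 A2 Ar B1 Br Bh : Type*} [Fintype Ω] [Fintype A1] [Fintype A2] [Fintype Ar]
  [Fintype B1] [Fintype Br] [Fintype Bh]

theorem condMI_eq_zero_of_factorization (p : Ω → ℝ) (hp : ∀ ω, 0 ≤ p ω)
    {X1 : Ω → A1} {X2 : Ω → A2} {Xr : Ω → Ar} {Y1 : Ω → B1} {Yr : Ω → Br} {Yh : Ω → Bh}
    {f1 : A1 → ℝ} {f2 : A2 → ℝ} {fr : Ar → ℝ} {fc : B1 → Br → A1 → A2 → Ar → ℝ}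
    {fh : Bh → Ar → Br → ℝ}
    (hf : ∀ a1 a2 ar b1 br h,
      jp p (fun ω => (X1 ω, X2 ω, Xr ω, Y1 ω, Yr ω, Yh ω)) (a1, a2, ar, b1, br, h) =
        f1 a1 * f2 a2 * fr ar * fc b1 br a1 a2 ar * fh h ar br) :
    condMI p Yh X2 (fun ω => ((X1 ω, Xr ω, Y1 ω), Yr ω)) = 0 := by
  refine condMI_eq_zero_of_jp_eq_mul p hp
    (fun h v => f1 v.1.1 * fr v.1.2.1 * fh h v.1.2.1 v.2)
    (fun a2 v => f2 a2 * fc v.1.2.2 v.2 v.1.1 a2 v.1.2.1) ?_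
  rintro h a2 ⟨⟨a1, ar, b1⟩, br⟩
  rw [jp_congr p (Y := fun ω => (X1 ω, X2 ω, Xr ω, Y1 ω, Yr ω, Yh ω))
    (b := (a1, a2, ar, b1, br, h)) fun ω => by simp only [Prod.ext_iff]; tauto, hf]
  ring

theorem compressForward_rate_eq (p : Ω → ℝ) (hp : ∀ ω, 0 ≤ p ω)
    (X1 : Ω → A1) (X2 : Ω → A2) (Xr : Ω → Ar) (Y1 : Ω → B1) (Yr : Ω → Br) (Yh : Ω → Bh)
    (hmarkov : condMI p Yh X2 (fun ω => ((X1 ω, Xr ω, Y1 ω), Yr ω)) = 0) :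
    condMI p X2 (fun ω => (Y1 ω, Yh ω)) (fun ω => (X1 ω, Xr ω)) =
      condMI p (fun ω => (X2 ω, Xr ω)) Y1 X1 -
        condMI p Yh Yr (fun ω => (X1 ω, X2 ω, Xr ω, Y1 ω)) -
        (condMI p Xr Y1 X1 - condMI p Yh Yr (fun ω => (X1 ω, Xr ω, Y1 ω))) := by
  have hLHS := condMI_prod_right p hp X2 Y1 Yh (fun ω => (X1 ω, Xr ω))
  have hYh : condMI p X2 Yh (fun ω => ((X1 ω, Xr ω), Y1 ω)) =
      condMI p Yh X2 (fun ω => (X1 ω, Xr ω, Y1 ω)) := by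
    rw [condMI_symm]
    exact condMI_congr p .rfl .rfl fun _ _ => by simp only [Prod.ext_iff]; tauto
  have hYhX2 := condMI_eq_sub_of_condMI_eq_zero p hp hmarkov
  have hX2 : condMI p Yh Yr (fun ω => ((X1 ω, Xr ω, Y1 ω), X2 ω)) =
      condMI p Yh Yr (fun ω => (X1 ω, X2 ω, Xr ω, Y1 ω)) :=
    condMI_congr p .rfl .rfl fun _ _ => by simp only [Prod.ext_iff]; tauto
  have hRHS : condMI p (fun ω => (X2 ω, Xr ω)) Y1 X1 =
      condMI p Xr Y1 X1 + condMI p X2 Y1 (fun ω => (X1 ω, Xr ω)) := by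
    rw [← condMI_prod_left p hp]
    exact condMI_congr p (fun _ _ => by simp only [Prod.ext_iff]; tauto) .rfl .rfl
  linarith

end Relay

theorem stmt12_general {Ω A1 A2 Ar B1 B2 Br Bh : Type*} [Fintype Ω]
    [Fintype A1] [Fintype A2] [Fintype Ar] [Fintype B1] [Fintype B2] [Fintype Br] [Fintype Bh]
    (p : Ω → ℝ) (hp : IsPMF p)
    (X1 : Ω → A1) (X2 : Ω → A2) (Xr : Ω → Ar)
    (Y1 : Ω → B1) (Y2 : Ω → B2) (Yr : Ω → Br) (Yh : Ω → Bh)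
    (hfact : ∃ (f1 : A1 → ℝ) (f2 : A2 → ℝ) (fr : Ar → ℝ)
        (fc : B1 → Br → A1 → A2 → Ar → ℝ) (fh : Bh → Ar → Br → ℝ),
      ∀ a1 a2 ar b1 br h,
        jp p (fun ω => (X1 ω, X2 ω, Xr ω, Y1 ω, Yr ω, Yh ω)) (a1, a2, ar, b1, br, h) =
          f1 a1 * f2 a2 * fr ar * fc b1 br a1 a2 ar * fh h ar br)
    (hbin : max (condMI p Yh Yr (fun ω => (X1 ω, Xr ω, Y1 ω)))
        (condMI p Yh Yr (fun ω => (X2 ω, Xr ω, Y2 ω))) ≤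
      min (condMI p Xr Y1 X1) (condMI p Xr Y2 X2)) :
    condMI p X2 (fun ω => (Y1 ω, Yh ω)) (fun ω => (X1 ω, Xr ω)) ≤
      condMI p (fun ω => (X2 ω, Xr ω)) Y1 X1 -
        condMI p Yh Yr (fun ω => (X1 ω, X2 ω, Xr ω, Y1 ω)) ∧
    (condMI p Xr Y1 X1 = condMI p Yh Yr (fun ω => (X1 ω, Xr ω, Y1 ω)) →
      condMI p X2 (fun ω => (Y1 ω, Yh ω)) (fun ω => (X1 ω, Xr ω)) =
        condMI p (fun ω => (X2 ω, Xr ω)) Y1 X1 -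
          condMI p Yh Yr (fun ω => (X1 ω, X2 ω, Xr ω, Y1 ω))) := by
  obtain ⟨f1, f2, fr, fc, fh, hf⟩ := hfact
  have hrate := compressForward_rate_eq p hp.1 X1 X2 Xr Y1 Yr Yh
    (condMI_eq_zero_of_factorization p hp.1 hf)
  have hbin₁ : condMI p Yh Yr (fun ω => (X1 ω, Xr ω, Y1 ω)) ≤ condMI p Xr Y1 X1 :=
    (le_max_left _ _).trans (hbin.trans (min_le_left _ _))
  exact ⟨by linarith, fun h => by linarith⟩

/-- under the factorization
`p(x1)p(x2)p(xr)p(y1,yr|x1,x2,xr)p(ŷr|xr,yr)`, the symmetry conditions and the binning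
constraint, the original compress-forward rate never exceeds the no-binning rate:
`I(X2;Y1,Yh|X1,Xr) ≤ I(X2,Xr;Y1|X1) − I(Yh;Yr|X1,X2,Xr,Y1)`, with equality when
`I(Xr;Y1|X1) = I(Yh;Yr|X1,Xr,Y1)`. -/
theorem stmt12 {Ω A1 A2 Ar B1 B2 Br Bh : Type*} [Fintype Ω]
    [Fintype A1] [Fintype A2] [Fintype Ar] [Fintype B1] [Fintype B2] [Fintype Br] [Fintype Bh]
    (p : Ω → ℝ) (hp : IsPMF p)
    (X1 : Ω → A1) (X2 : Ω → A2) (Xr : Ω → Ar)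
    (Y1 : Ω → B1) (Y2 : Ω → B2) (Yr : Ω → Br) (Yh : Ω → Bh)
    (hfact : ∃ (f1 : A1 → ℝ) (f2 : A2 → ℝ) (fr : Ar → ℝ)
        (fc : B1 → Br → A1 → A2 → Ar → ℝ) (fh : Bh → Ar → Br → ℝ),
      ∀ a1 a2 ar b1 br h,
        jp p (fun ω => (X1 ω, X2 ω, Xr ω, Y1 ω, Yr ω, Yh ω)) (a1, a2, ar, b1, br, h) =
          f1 a1 * f2 a2 * fr ar * fc b1 br a1 a2 ar * fh h ar br)
    (hsym1 : condMI p Xr Y1 X1 = condMI p Xr Y2 X2)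
    (hsym2 : condMI p Yh Yr (fun ω => (X1 ω, Xr ω, Y1 ω)) =
      condMI p Yh Yr (fun ω => (X2 ω, Xr ω, Y2 ω)))
    (hbin : max (condMI p Yh Yr (fun ω => (X1 ω, Xr ω, Y1 ω)))
        (condMI p Yh Yr (fun ω => (X2 ω, Xr ω, Y2 ω))) ≤
      min (condMI p Xr Y1 X1) (condMI p Xr Y2 X2)) :
    condMI p X2 (fun ω => (Y1 ω, Yh ω)) (fun ω => (X1 ω, Xr ω)) ≤
      condMI p (fun ω => (X2 ω, Xr ω)) Y1 X1 -
        condMI p Yh Yr (fun ω => (X1 ω, X2 ω, Xr ω, Y1 ω)) ∧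
    (condMI p Xr Y1 X1 = condMI p Yh Yr (fun ω => (X1 ω, Xr ω, Y1 ω)) →
      condMI p X2 (fun ω => (Y1 ω, Yh ω)) (fun ω => (X1 ω, Xr ω)) =
        condMI p (fun ω => (X2 ω, Xr ω)) Y1 X1 -
          condMI p Yh Yr (fun ω => (X1 ω, X2 ω, Xr ω, Y1 ω))) :=
  stmt12_general p hp X1 X2 Xr Y1 Y2 Yr Yh hfact hbin
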